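/- arXiv:2504.01193 — 2 statements merged into one kernel-verified Lean document; each statement's English description precedes it below -/
import Mathlib

section
/- For two probability measures μ and ν on ℝ with finite first moments, the Wasserstein-1 distance equals the L¹ distance between their cumulative distribution functions: W₁(μ,ν) = ∫_ℝ |F_μ(x) − F_ν(x)| dx. -/
open MeasureTheory Set ENNReal

/-- The Wasserstein-1 distance between two measures on `ℝ`, defined as the infimum of the
expected distance over all couplings (measures on `ℝ × ℝ` with the given marginals). -/
noncomputable def W1 (μ ν : Measure ℝ) : ℝ≥0∞ :=
  ⨅ γ ∈ {γ : Measure (ℝ × ℝ) | γ.map Prod.fst = μ ∧ γ.map Prod.snd = ν},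
    ∫⁻ p, edist p.1 p.2 ∂γ

open ProbabilityTheory Filter
open scoped symmDiff

set_option linter.unusedSectionVars false
set_option linter.unusedVariables false

/-- Auxiliary set: pairs `((a,b),t)` such that exactly one of `a ≤ t`, `b ≤ t` holds. -/
def WSet : Set ((ℝ × ℝ) × ℝ) := {q | q.1.1 ≤ q.2} ∆ {q | q.1.2 ≤ q.2}

lemma measurableSet_WSet : MeasurableSet WSet :=
  (measurableSet_le measurable_fst.fst measurable_snd).symmDiff
    (measurableSet_le measurable_fst.snd measurable_snd)

lemma mem_WSet {a b t : ℝ} : ((a, b), t) ∈ WSet ↔ (a ≤ t ∧ ¬ b ≤ t) ∨ (b ≤ t ∧ ¬ a ≤ t) := by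
  simp [WSet, Set.mem_symmDiff]

lemma volume_symmDiff_Ici (a b : ℝ) : volume (Ici a ∆ Ici b) = ENNReal.ofReal |a - b| := by
  wlog h : a ≤ b
  · rw [symmDiff_comm, abs_sub_comm]; exact this b a (le_of_not_ge h)
  rw [Set.symmDiff_def]
  rw [Ici_diff_Ici, Ici_diff_Ici, Ico_eq_empty (not_lt.2 h), union_empty, Real.volume_Ico,
    abs_sub_comm, abs_of_nonneg (sub_nonneg.2 h)]

lemma edist_eq_lintegral_WSet (a b : ℝ) :
    edist a b = ∫⁻ t, WSet.indicator 1 ((a, b), t) := by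
  have hset : ∀ t : ℝ, WSet.indicator (1 : (ℝ × ℝ) × ℝ → ℝ≥0∞) ((a, b), t)
      = (Ici a ∆ Ici b).indicator 1 t := by
    intro t
    classical
    have hiff : ((a, b), t) ∈ WSet ↔ t ∈ Ici a ∆ Ici b := by
      simp [mem_WSet, Set.mem_symmDiff]
    rw [Set.indicator_apply, Set.indicator_apply, if_congr hiff rfl rfl]
    simp
  simp_rw [hset]
  rw [lintegral_indicator_one (measurableSet_Ici.symmDiff measurableSet_Ici),
    volume_symmDiff_Ici, edist_dist, Real.dist_eq]

lemma lintegral_edist_eq_lintegral_slice (γ : Measure (ℝ × ℝ)) [SFinite γ] :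
    ∫⁻ p, edist p.1 p.2 ∂γ = ∫⁻ t, γ {p : ℝ × ℝ | (p, t) ∈ WSet} := by
  have h1 : ∀ p : ℝ × ℝ, edist p.1 p.2 = ∫⁻ t, WSet.indicator 1 (p, t) := by
    intro p
    simpa using edist_eq_lintegral_WSet p.1 p.2
  simp_rw [h1]
  rw [lintegral_lintegral_swap]
  · refine lintegral_congr fun t => ?_
    have : ∀ p : ℝ × ℝ, WSet.indicator (1 : (ℝ × ℝ) × ℝ → ℝ≥0∞) (p, t)
        = {p : ℝ × ℝ | (p, t) ∈ WSet}.indicator 1 p := by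
      intro p
      classical
      rw [Set.indicator_apply, Set.indicator_apply]
      simp
    simp_rw [this]
    exact lintegral_indicator_one (measurableSet_WSet.preimage
      (measurable_id.prodMk measurable_const))
  · exact ((measurable_one.indicator measurableSet_WSet).comp
      (measurable_fst.prodMk measurable_snd)).aemeasurable

lemma ofReal_abs_toReal_le_symmDiff {α : Type*} {_ : MeasurableSpace α}
    (γ : Measure α) [IsFiniteMeasure γ] (A B : Set α) :
    ENNReal.ofReal |(γ A).toReal - (γ B).toReal| ≤ γ (A ∆ B) := by
  have key : ∀ S T : Set α, (γ S).toReal - (γ T).toReal ≤ (γ (S ∆ T)).toReal := by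
    intro S T
    have hsub : S ⊆ T ∪ S ∆ T := by
      intro x hx
      by_cases hxT : x ∈ T
      · exact Or.inl hxT
      · exact Or.inr (Set.mem_symmDiff.2 (Or.inl ⟨hx, hxT⟩))
    have h1 : γ S ≤ γ T + γ (S ∆ T) := (measure_mono hsub).trans (measure_union_le _ _)
    have h2 : (γ S).toReal ≤ (γ T).toReal + (γ (S ∆ T)).toReal := by
      have := ENNReal.toReal_mono (by finiteness) h1
      rwa [ENNReal.toReal_add (measure_ne_top _ _) (measure_ne_top _ _)] at this
    linarith
  have habs : |(γ A).toReal - (γ B).toReal| ≤ (γ (A ∆ B)).toReal := by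
    rw [abs_sub_le_iff]
    exact ⟨key A B, by rw [symmDiff_comm]; exact key B A⟩
  calc ENNReal.ofReal |(γ A).toReal - (γ B).toReal| ≤ ENNReal.ofReal (γ (A ∆ B)).toReal :=
        ENNReal.ofReal_le_ofReal habs
    _ = γ (A ∆ B) := ENNReal.ofReal_toReal (measure_ne_top _ _)

lemma slice_eq (t : ℝ) :
    {p : ℝ × ℝ | (p, t) ∈ WSet} = (Prod.fst ⁻¹' Iic t) ∆ (Prod.snd ⁻¹' Iic t) := by
  ext ⟨a, b⟩
  simp [mem_WSet, Set.mem_symmDiff]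

section Quantile

variable (μ : Measure ℝ) [IsProbabilityMeasure μ]

/-- Quantile function of a probability measure on `ℝ`, with junk value `0` outside `(0,1)`. -/
noncomputable def qf : ℝ → ℝ :=
  fun u => if 0 < u ∧ u < 1 then sInf {x | u ≤ cdf μ x} else 0

variable {μ}

lemma qf_set_nonempty {u : ℝ} (hu1 : u < 1) : {x | u ≤ cdf μ x}.Nonempty := by
  have h : ∀ᶠ x in Filter.atTop, u ≤ cdf μ x :=
    (tendsto_cdf_atTop μ).eventually (eventually_ge_nhds hu1)
  exact h.exists

lemma qf_set_bddBelow {u : ℝ} (hu0 : 0 < u) : BddBelow {x | u ≤ cdf μ x} := by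
  have h : ∀ᶠ x in Filter.atBot, cdf μ x < u :=
    (tendsto_cdf_atBot μ).eventually (eventually_lt_nhds hu0)
  obtain ⟨x0, hx0⟩ := h.exists
  refine ⟨x0, fun x hx => ?_⟩
  by_contra hlt
  push_neg at hlt
  exact absurd hx (not_le.2 (lt_of_le_of_lt (monotone_cdf μ hlt.le) hx0))

lemma qf_le_iff {u t : ℝ} (hu0 : 0 < u) (hu1 : u < 1) :
    qf μ u ≤ t ↔ u ≤ cdf μ t := by
  rw [qf, if_pos ⟨hu0, hu1⟩]
  constructor
  · intro h
    have hev : ∀ s ∈ Ioi t, u ≤ cdf μ s := by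
      intro s hs
      obtain ⟨x, hxS, hxs⟩ := exists_lt_of_csInf_lt (qf_set_nonempty hu1) (lt_of_le_of_lt h hs)
      exact hxS.trans (monotone_cdf μ hxs.le)
    have htend : Filter.Tendsto (cdf μ) (nhdsWithin t (Ioi t)) (nhds (cdf μ t)) :=
      ((cdf μ).right_continuous t).tendsto.mono_left
        (nhdsWithin_mono t Ioi_subset_Ici_self)
    exact ge_of_tendsto htend (eventually_nhdsWithin_of_forall hev)
  · intro h
    exact csInf_le (qf_set_bddBelow hu0) h

lemma measurable_qf : Measurable (qf μ) := by
  apply measurable_of_Iic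
  intro t
  have : qf μ ⁻¹' Iic t =
      (Ioo 0 1 ∩ Iic (cdf μ t)) ∪ ((Ioo (0:ℝ) 1)ᶜ ∩ {u : ℝ | (0:ℝ) ≤ t}) := by
    ext u
    by_cases hu : 0 < u ∧ u < 1
    · simp only [mem_preimage, mem_Iic, qf_le_iff hu.1 hu.2, mem_union, mem_inter_iff,
        mem_Ioo, mem_compl_iff, mem_setOf_eq]
      tauto
    · have : qf μ u = 0 := by rw [qf, if_neg hu]
      simp only [mem_preimage, mem_Iic, this, mem_union, mem_inter_iff, mem_Ioo,
        mem_compl_iff, mem_setOf_eq]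
      tauto
  rw [this]
  have hconst : MeasurableSet {u : ℝ | (0:ℝ) ≤ t} := by
    by_cases h : (0:ℝ) ≤ t
    · simp [h]
    · simp [h]
  exact ((measurableSet_Ioo.inter measurableSet_Iic).union
    (measurableSet_Ioo.compl.inter hconst))

lemma volume_Ioo_inter_Iic {c : ℝ} (hc0 : 0 ≤ c) (hc1 : c ≤ 1) :
    volume (Ioo (0:ℝ) 1 ∩ Iic c) = ENNReal.ofReal c := by
  apply le_antisymm
  · calc volume (Ioo (0:ℝ) 1 ∩ Iic c) ≤ volume (Ioc (0:ℝ) c) := by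
          apply measure_mono
          rintro x ⟨⟨hx0, _⟩, hxc⟩
          exact ⟨hx0, hxc⟩
      _ = ENNReal.ofReal c := by rw [Real.volume_Ioc, sub_zero]
  · calc ENNReal.ofReal c = volume (Ioo (0:ℝ) c) := by rw [Real.volume_Ioo, sub_zero]
      _ ≤ volume (Ioo (0:ℝ) 1 ∩ Iic c) := by
          apply measure_mono
          rintro x ⟨hx0, hxc⟩
          exact ⟨⟨hx0, lt_of_lt_of_le hxc hc1⟩, hxc.le⟩

lemma map_qf : (volume.restrict (Ioo (0:ℝ) 1)).map (qf μ) = μ := by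
  have hfin : IsFiniteMeasure ((volume.restrict (Ioo (0:ℝ) 1)).map (qf μ)) := by
    constructor
    rw [Measure.map_apply measurable_qf MeasurableSet.univ]
    simp [Real.volume_Ioo]
  refine Measure.ext_of_Iic _ _ (fun t => ?_)
  rw [Measure.map_apply measurable_qf measurableSet_Iic,
    Measure.restrict_apply (measurable_qf measurableSet_Iic)]
  have hset : qf μ ⁻¹' Iic t ∩ Ioo 0 1 = Ioo 0 1 ∩ Iic (cdf μ t) := by
    ext u
    constructor
    · rintro ⟨hpre, hu⟩
      rw [mem_Ioo] at hu
      exact ⟨mem_Ioo.2 hu, (qf_le_iff hu.1 hu.2).1 hpre⟩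
    · rintro ⟨hu, hle⟩
      rw [mem_Ioo] at hu
      exact ⟨(qf_le_iff hu.1 hu.2).2 hle, mem_Ioo.2 hu⟩
  rw [hset, volume_Ioo_inter_Iic (cdf_nonneg μ t) (cdf_le_one μ t), ofReal_cdf]

end Quantile

lemma volume_symmDiff_Iic_inter {a b : ℝ} (ha0 : 0 ≤ a) (ha1 : a ≤ 1) (hb0 : 0 ≤ b)
    (hb1 : b ≤ 1) : volume ((Iic a ∆ Iic b) ∩ Ioo (0:ℝ) 1) = ENNReal.ofReal |a - b| := by
  wlog h : a ≤ b
  · rw [symmDiff_comm, abs_sub_comm]; exact this hb0 hb1 ha0 ha1 (le_of_not_ge h)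
  have hsd : Iic a ∆ Iic b = Ioc a b := by
    rw [Set.symmDiff_def, Iic_sdiff_Iic, Iic_sdiff_Iic, Ioc_eq_empty (not_lt.2 h), empty_union]
  rw [hsd, abs_sub_comm, abs_of_nonneg (sub_nonneg.2 h)]
  apply le_antisymm
  · calc volume (Ioc a b ∩ Ioo (0:ℝ) 1) ≤ volume (Ioc a b) := measure_mono inter_subset_left
      _ = ENNReal.ofReal (b - a) := Real.volume_Ioc
  · calc ENNReal.ofReal (b - a) = volume (Ioo a b) := Real.volume_Ioo.symm
      _ ≤ volume (Ioc a b ∩ Ioo (0:ℝ) 1) := by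
          apply measure_mono
          rintro x ⟨hx1, hx2⟩
          exact ⟨⟨hx1, hx2.le⟩, lt_of_le_of_lt ha0 hx1, lt_of_lt_of_le hx2 hb1⟩

theorem wasserstein_eq_l1_of_cdfs' (μ ν : Measure ℝ)
    [IsProbabilityMeasure μ] [IsProbabilityMeasure ν] :
    W1 μ ν = ∫⁻ x, ENNReal.ofReal |(μ (Iic x)).toReal - (ν (Iic x)).toReal| := by
  have habs : ∀ t : ℝ, |(μ (Iic t)).toReal - (ν (Iic t)).toReal| = |cdf μ t - cdf ν t| := by
    intro t
    rw [cdf_eq_real, cdf_eq_real, measureReal_def, measureReal_def]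
  apply le_antisymm
  · -- upper bound via quantile coupling
    set leb01 := volume.restrict (Ioo (0:ℝ) 1) with hleb
    have hQ : Measurable fun u => (qf μ u, qf ν u) := measurable_qf.prodMk measurable_qf
    set γ := leb01.map (fun u => (qf μ u, qf ν u)) with hγ
    have hfst : γ.map Prod.fst = μ := by
      rw [hγ, Measure.map_map measurable_fst hQ]
      exact map_qf
    have hsnd : γ.map Prod.snd = ν := by
      rw [hγ, Measure.map_map measurable_snd hQ]
      exact map_qf
    have hW : W1 μ ν ≤ ∫⁻ p, edist p.1 p.2 ∂γ := iInf₂_le γ ⟨hfst, hsnd⟩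
    refine hW.trans_eq ?_
    rw [hγ, lintegral_map (measurable_fst.edist measurable_snd) hQ]
    -- now compute ∫⁻ u in (0,1), edist (qf μ u) (qf ν u)
    have h1 : ∀ u : ℝ, edist (qf μ u) (qf ν u)
        = ∫⁻ t, WSet.indicator 1 ((qf μ u, qf ν u), t) := fun u =>
      edist_eq_lintegral_WSet _ _
    simp_rw [h1]
    rw [lintegral_lintegral_swap]
    · refine lintegral_congr fun t => ?_
      have hind : ∀ u : ℝ, WSet.indicator (1 : (ℝ × ℝ) × ℝ → ℝ≥0∞) ((qf μ u, qf ν u), t)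
          = {u : ℝ | ((qf μ u, qf ν u), t) ∈ WSet}.indicator 1 u := by
        intro u
        classical
        rw [Set.indicator_apply, Set.indicator_apply]
        simp
      simp_rw [hind]
      have hms : MeasurableSet {u : ℝ | ((qf μ u, qf ν u), t) ∈ WSet} :=
        measurableSet_WSet.preimage (hQ.prodMk measurable_const)
      rw [lintegral_indicator_one hms, Measure.restrict_apply hms]
      have hset : {u : ℝ | ((qf μ u, qf ν u), t) ∈ WSet} ∩ Ioo 0 1
          = (Iic (cdf μ t) ∆ Iic (cdf ν t)) ∩ Ioo (0:ℝ) 1 := by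
        ext u
        simp only [mem_inter_iff, mem_setOf_eq, mem_Ioo, Set.mem_symmDiff, mem_Iic, mem_WSet]
        constructor
        · rintro ⟨hw, hu0, hu1⟩
          rw [qf_le_iff hu0 hu1, qf_le_iff hu0 hu1] at hw
          exact ⟨hw, hu0, hu1⟩
        · rintro ⟨hw, hu0, hu1⟩
          rw [← qf_le_iff (μ := μ) hu0 hu1, ← qf_le_iff (μ := ν) hu0 hu1] at hw
          exact ⟨hw, hu0, hu1⟩
      rw [hset, volume_symmDiff_Iic_inter (cdf_nonneg μ t) (cdf_le_one μ t)
        (cdf_nonneg ν t) (cdf_le_one ν t), habs]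
    · exact ((measurable_one.indicator measurableSet_WSet).comp
        ((hQ.comp measurable_fst).prodMk measurable_snd)).aemeasurable
  · -- lower bound: every coupling dominates the L¹ distance of cdfs
    refine le_iInf₂ fun γ hγ => ?_
    obtain ⟨hfst, hsnd⟩ := hγ
    have hγuniv : γ Set.univ = 1 := by
      have := congrArg (fun m : Measure ℝ => m Set.univ) hfst
      simpa [Measure.map_apply measurable_fst MeasurableSet.univ] using this
    have : IsProbabilityMeasure γ := ⟨hγuniv⟩
    rw [lintegral_edist_eq_lintegral_slice γ]
    refine lintegral_mono fun t => ?_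
    rw [slice_eq t]
    have hA : γ (Prod.fst ⁻¹' Iic t) = μ (Iic t) := by
      rw [← hfst, Measure.map_apply measurable_fst measurableSet_Iic]
    have hB : γ (Prod.snd ⁻¹' Iic t) = ν (Iic t) := by
      rw [← hsnd, Measure.map_apply measurable_snd measurableSet_Iic]
    calc ENNReal.ofReal |(μ (Iic t)).toReal - (ν (Iic t)).toReal|
        = ENNReal.ofReal |(γ (Prod.fst ⁻¹' Iic t)).toReal - (γ (Prod.snd ⁻¹' Iic t)).toReal| := by
          rw [hA, hB]
      _ ≤ γ ((Prod.fst ⁻¹' Iic t) ∆ (Prod.snd ⁻¹' Iic t)) :=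
          ofReal_abs_toReal_le_symmDiff γ _ _

/-- For two probability measures on `ℝ` with finite first moments, the Wasserstein-1 distance
equals the `L¹` distance between their cumulative distribution functions. -/
theorem wasserstein_eq_l1_of_cdfs (μ ν : Measure ℝ)
    [IsProbabilityMeasure μ] [IsProbabilityMeasure ν]
    (hμ : ∫⁻ x, (‖x‖₊ : ℝ≥0∞) ∂μ ≠ ⊤) (hν : ∫⁻ x, (‖x‖₊ : ℝ≥0∞) ∂ν ≠ ⊤) :
    W1 μ ν = ∫⁻ x, ENNReal.ofReal |(μ (Iic x)).toReal - (ν (Iic x)).toReal| :=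
  wasserstein_eq_l1_of_cdfs' μ ν
end

section
/- If μ is a probability measure supported on [0, M] with M = M_Δ·Δ, and p(0) = μ({0}), p(i) = μ(((i−1)Δ, iΔ]) for 1 ≤ i ≤ M_Δ, then the measure ν = p(0)·δ₀ + Σ_{i=1}^{M_Δ} p(i)·U((i−1)Δ, iΔ) satisfies W₁(μ, ν) ≤ Δ, where U(a,b) denotes the uniform distribution on [a,b]. -/
open MeasureTheory Set ENNReal

/-- The uniform probability distribution on the interval `((i-1)Δ, iΔ]`. -/
noncomputable def unifIoc (a b : ℝ) : Measure ℝ :=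
  (ENNReal.ofReal (b - a))⁻¹ • volume.restrict (Set.Ioc a b)

instance (a b : ℝ) : IsFiniteMeasure (unifIoc a b) := by
  constructor
  rw [unifIoc, Measure.smul_apply, smul_eq_mul, Measure.restrict_apply_univ, Real.volume_Ioc]
  rcases le_or_gt b a with h | h
  · simp [ENNReal.ofReal_eq_zero.2 (by linarith : b - a ≤ 0)]
  · rw [ENNReal.inv_mul_cancel (by simp [h]) (by simp)]; exact one_lt_top

theorem unifIoc_univ {a b : ℝ} (h : a < b) : unifIoc a b univ = 1 := by
  rw [unifIoc, Measure.smul_apply, smul_eq_mul, Measure.restrict_apply_univ, Real.volume_Ioc]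
  exact ENNReal.inv_mul_cancel (by simp [h]) (by simp)

theorem unifIoc_compl {a b : ℝ} : unifIoc a b (Set.Ioc a b)ᶜ = 0 := by
  rw [unifIoc, Measure.smul_apply, Measure.restrict_apply (measurableSet_Ioc.compl)]
  simp

theorem map_finsum' {s : Finset ℕ} {f : ℕ → Measure (ℝ×ℝ)} {g : ℝ×ℝ → ℝ} (hg : Measurable g) :
    (∑ i ∈ s, f i).map g = ∑ i ∈ s, (f i).map g := by
  induction s using Finset.cons_induction with
  | empty => simp
  | cons a s ha ih => rw [Finset.sum_cons, Finset.sum_cons, Measure.map_add _ _ hg, ih]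

theorem lintegral_finsum {s : Finset ℕ} {f : ℕ → Measure (ℝ×ℝ)} (g : ℝ×ℝ → ℝ≥0∞) :
    ∫⁻ p, g p ∂(∑ i ∈ s, f i) = ∑ i ∈ s, ∫⁻ p, g p ∂(f i) := by
  induction s using Finset.cons_induction with
  | empty => simp
  | cons a s ha ih => rw [Finset.sum_cons, Finset.sum_cons, lintegral_add_measure, ih]

theorem ae_prod_mem {κ η : Measure ℝ} [SFinite κ] [SFinite η] {s t : Set ℝ}
    (hκ : κ sᶜ = 0) (hη : η tᶜ = 0) : ∀ᵐ p ∂κ.prod η, p.1 ∈ s ∧ p.2 ∈ t := by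
  rw [ae_iff]
  apply measure_mono_null (t := (sᶜ ×ˢ univ) ∪ (univ ×ˢ tᶜ))
  · intro p hp
    simp only [mem_setOf_eq, not_and_or] at hp
    rcases hp with h | h
    · exact Or.inl ⟨h, mem_univ _⟩
    · exact Or.inr ⟨mem_univ _, h⟩
  · refine measure_union_null ?_ ?_ <;> rw [Measure.prod_prod] <;> simp [hκ, hη]

theorem cover_lemma {Δ : ℝ} (hΔ : 0 < Δ) (n : ℕ) :
    Icc (0:ℝ) (n * Δ) = {0} ∪ ⋃ i ∈ Finset.Icc 1 n, Ioc (((i:ℝ) - 1) * Δ) ((i:ℝ) * Δ) := by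
  ext x
  simp only [mem_Icc, mem_union, mem_singleton_iff, mem_iUnion, Finset.mem_Icc, mem_Ioc,
    exists_prop]
  constructor
  · rintro ⟨hx0, hxM⟩
    rcases eq_or_lt_of_le hx0 with h | h
    · exact Or.inl h.symm
    · refine Or.inr ⟨⌈x / Δ⌉₊, ⟨Nat.one_le_iff_ne_zero.2 ?_, Nat.ceil_le.2 ?_⟩, ?_, ?_⟩
      · simp only [ne_eq, Nat.ceil_eq_zero, not_le]
        exact div_pos h hΔ
      · rw [div_le_iff₀ hΔ] ; exact hxM
      · have h1 : (⌈x / Δ⌉₊ : ℝ) < x / Δ + 1 :=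
          Nat.ceil_lt_add_one (le_of_lt (div_pos h hΔ))
        rw [sub_mul, one_mul, sub_lt_iff_lt_add]
        calc (⌈x / Δ⌉₊ : ℝ) * Δ < (x / Δ + 1) * Δ := by
              exact mul_lt_mul_of_pos_right h1 hΔ
          _ = x + Δ := by field_simp
      · calc x = (x / Δ) * Δ := by field_simp
          _ ≤ (⌈x / Δ⌉₊ : ℝ) * Δ := mul_le_mul_of_nonneg_right (Nat.le_ceil _) hΔ.le
  · rintro (rfl | ⟨i, ⟨hi1, hin⟩, hlt, hle⟩)
    · exact ⟨le_refl _, by positivity⟩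
    · have h1 : (1:ℝ) ≤ i := by exact_mod_cast hi1
      have h2 : (i:ℝ) ≤ n := by exact_mod_cast hin
      constructor
      · nlinarith
      · calc x ≤ (i:ℝ) * Δ := hle
          _ ≤ (n:ℝ) * Δ := by nlinarith


/-- If `μ` is a probability measure: main theorem. -/
theorem wasserstein_discretization_le (Δ : ℝ) (hΔ : 0 < Δ) (MΔ : ℕ)
    (μ : Measure ℝ) [IsProbabilityMeasure μ]
    (hsupp : μ (Set.Icc 0 ((MΔ : ℝ) * Δ)) = 1) :
    W1 μ
      (μ {0} • Measure.dirac (0 : ℝ) +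
        ∑ i ∈ Finset.Icc 1 MΔ,
          μ (Set.Ioc (((i : ℝ) - 1) * Δ) ((i : ℝ) * Δ)) •
            unifIoc (((i : ℝ) - 1) * Δ) ((i : ℝ) * Δ))
      ≤ ENNReal.ofReal Δ := by
  rw [W1]
  classical
  set s := Finset.Icc 1 MΔ with hs
  set A : ℕ → Set ℝ := fun i => Ioc (((i:ℝ) - 1) * Δ) ((i:ℝ) * Δ) with hA
  set U : ℕ → Measure ℝ := fun i => unifIoc (((i:ℝ) - 1) * Δ) ((i:ℝ) * Δ) with hUdef
  have hab : ∀ i : ℕ, ((i:ℝ) - 1) * Δ < (i:ℝ) * Δ :=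
    fun i => mul_lt_mul_of_pos_right (by linarith) hΔ
  have hU1 : ∀ i : ℕ, U i univ = 1 := fun i => unifIoc_univ (hab i)
  set γ : Measure (ℝ × ℝ) :=
    (μ.restrict {0}).prod (Measure.dirac 0) +
      ∑ i ∈ s, (μ.restrict (A i)).prod (U i) with hγ
  -- decomposition of μ
  have hμc : μ (Icc (0:ℝ) ((MΔ : ℝ) * Δ))ᶜ = 0 := by
    rw [measure_compl measurableSet_Icc (measure_ne_top μ _), hsupp, measure_univ, tsub_self]
  have hdisj : ∀ i ∈ s, ∀ j ∈ s, i ≠ j → Disjoint (A i) (A j) := by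
    have key : ∀ i j : ℕ, i < j → Disjoint (A i) (A j) := by
      intro i j hij
      rw [Set.Ioc_disjoint_Ioc]
      have hij' : (i:ℝ) ≤ (j:ℝ) - 1 := by
        have : (i:ℝ) + 1 ≤ j := by exact_mod_cast hij
        linarith
      have h2 : (i:ℝ) * Δ ≤ ((j:ℝ) - 1) * Δ := mul_le_mul_of_nonneg_right hij' hΔ.le
      exact le_trans (min_le_left _ _) (le_trans h2 (le_max_right _ _))
    intro i _ j _ hij
    rcases lt_or_gt_of_ne hij with h | h
    · exact key i j h
    · exact (key j i h).symm
  have h0A : ∀ i ∈ s, (0:ℝ) ∉ A i := by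
    intro i hi
    simp only [hA, mem_Ioc, not_and_or, not_lt]
    left
    have : (1:ℕ) ≤ i := (Finset.mem_Icc.1 hi).1
    have : (1:ℝ) ≤ i := by exact_mod_cast this
    nlinarith
  have key : μ.restrict {0} + ∑ i ∈ s, μ.restrict (A i) = μ := by
    ext t ht
    simp only [Measure.add_apply, Measure.coe_finset_sum, Finset.sum_apply,
      Measure.restrict_apply ht]
    rw [← measure_inter_conull (s := t) hμc, cover_lemma hΔ MΔ,
      inter_union_distrib_left, inter_iUnion₂]
    rw [measure_union ?hd ?hm, measure_biUnion_finset ?hpd ?hms]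
    case hd =>
      apply Set.disjoint_iUnion₂_right.2
      intro i hi
      exact Disjoint.mono inter_subset_right inter_subset_right
        (disjoint_singleton_left.2 (h0A i hi))
    case hm => exact Finset.measurableSet_biUnion _ (fun i _ => ht.inter measurableSet_Ioc)
    case hpd =>
      intro i hi j hj hij
      exact Disjoint.mono inter_subset_right inter_subset_right
        (hdisj i (Finset.mem_coe.1 hi) j (Finset.mem_coe.1 hj) hij)
    case hms => exact fun i _ => ht.inter measurableSet_Ioc
  have hfst : γ.map Prod.fst = μ := by
    rw [hγ, Measure.map_add _ _ measurable_fst, map_finsum' measurable_fst]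
    simp only [Measure.map_fst_prod, measure_univ, hU1, one_smul]
    exact key
  have hsnd : γ.map Prod.snd = μ {0} • Measure.dirac (0 : ℝ) +
      ∑ i ∈ s, μ (A i) • U i := by
    rw [hγ, Measure.map_add _ _ measurable_snd, map_finsum' measurable_snd]
    simp only [Measure.map_snd_prod, Measure.restrict_apply_univ]
  refine le_trans (iInf₂_le γ ⟨hfst, hsnd⟩) ?_
  rw [hγ, lintegral_add_measure, lintegral_finsum]
  have h0 : ∫⁻ p, edist p.1 p.2 ∂((μ.restrict {0}).prod (Measure.dirac (0:ℝ))) = 0 := by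
    rw [lintegral_eq_zero_iff (measurable_fst.edist measurable_snd)]
    have h1 : μ.restrict {0} ({(0:ℝ)}ᶜ) = 0 := by
      rw [Measure.restrict_apply (measurableSet_singleton _).compl]
      simp
    have h2 : Measure.dirac (0:ℝ) ({(0:ℝ)}ᶜ) = 0 := by
      rw [Measure.dirac_apply' _ (measurableSet_singleton _).compl]
      simp
    filter_upwards [ae_prod_mem h1 h2] with p hp
    simp only [mem_singleton_iff] at hp
    simp [hp.1, hp.2]
  have hpiece : ∀ i ∈ s, ∫⁻ p, edist p.1 p.2 ∂((μ.restrict (A i)).prod (U i)) ≤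
      ENNReal.ofReal Δ * μ (A i) := by
    intro i hi
    have h1 : μ.restrict (A i) ((A i)ᶜ) = 0 := by
      rw [Measure.restrict_apply measurableSet_Ioc.compl]
      simp [hA]
    have h2 : U i ((A i)ᶜ) = 0 := unifIoc_compl
    have hd : (i:ℝ) * Δ - ((i:ℝ) - 1) * Δ = Δ := by ring
    calc ∫⁻ p, edist p.1 p.2 ∂((μ.restrict (A i)).prod (U i))
        ≤ ∫⁻ _, ENNReal.ofReal Δ ∂((μ.restrict (A i)).prod (U i)) := by
          apply lintegral_mono_ae
          filter_upwards [ae_prod_mem h1 h2] with p hp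
          obtain ⟨⟨ha1, hb1⟩, ⟨ha2, hb2⟩⟩ := hp
          rw [edist_dist]
          apply ENNReal.ofReal_le_ofReal
          rw [Real.dist_eq, abs_sub_le_iff]
          constructor <;> linarith
      _ = ENNReal.ofReal Δ * ((μ.restrict (A i)).prod (U i)) univ := lintegral_const _
      _ = ENNReal.ofReal Δ * μ (A i) := by
          rw [← Set.univ_prod_univ, Measure.prod_prod, Measure.restrict_apply_univ, hU1,
            mul_one]
  have hsum : ∑ i ∈ s, μ (A i) ≤ 1 := by
    have := congrArg (fun m : Measure ℝ => m univ) key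
    simp only [Measure.add_apply, Measure.coe_finset_sum, Finset.sum_apply,
      Measure.restrict_apply_univ, measure_univ] at this
    calc ∑ i ∈ s, μ (A i) ≤ μ {0} + ∑ i ∈ s, μ (A i) := le_add_self
      _ = 1 := this
  calc (∫⁻ p, edist p.1 p.2 ∂((μ.restrict {0}).prod (Measure.dirac (0:ℝ)))) +
        ∑ i ∈ s, ∫⁻ p, edist p.1 p.2 ∂((μ.restrict (A i)).prod (U i))
      ≤ 0 + ∑ i ∈ s, ENNReal.ofReal Δ * μ (A i) :=
        add_le_add (le_of_eq h0) (Finset.sum_le_sum hpiece)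
    _ = ENNReal.ofReal Δ * ∑ i ∈ s, μ (A i) := by rw [zero_add, Finset.mul_sum]
    _ ≤ ENNReal.ofReal Δ * 1 := mul_le_mul_right hsum _
    _ = ENNReal.ofReal Δ := mul_one _
end
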